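/- arXiv:1609.08900 — 5 statements merged into one kernel-verified Lean document; each statement's English description precedes it below -/
import Mathlib

section
/- Let G be a group generated by a finite subset T ⊆ G, let N ⊴ G be a normal subgroup of finite index, and let T̄ denote the multiset {tN : t ∈ T} of images of T in G/N. Then d_G(N) ≤ r(G/N, T̄). -/
/-- `d_G(N)`: the least cardinality of a subset `S ⊆ N` whose normal closure in `G`
equals `N`. -/
noncomputable def minNormalGens {G : Type*} [Group G] (N : Subgroup G) : ℕ :=
  sInf {n : ℕ | ∃ S : Finset G, S.card = n ∧ ↑S ⊆ (N : Set G) ∧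
    Subgroup.normalClosure (S : Set G) = N}

/-- `r(K, T)` for a generating multiset `T = (t 1, …, t d)` of `K`: the least number of
normal generators of the kernel of the induced surjection from the free group on
`d` letters sending the `i`-th generator to `t i`. -/
noncomputable def relNum {K : Type*} [Group K] {d : ℕ} (t : Fin d → K) : ℕ :=
  minNormalGens (FreeGroup.lift t).ker

/-- If `G` is generated by a finite subset `T` (here enumerated injectively
by `t : Fin d → G`), and `N ⊴ G` has finite index, then `d_G(N) ≤ r(G/N, T̄)`, where
`T̄` is the multiset of images of `T` in `G/N`. -/
theorem stmt3 {G : Type*} [Group G] {d : ℕ} (t : Fin d → G)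
    (ht_inj : Function.Injective t)
    (ht : Subgroup.closure (Set.range t) = ⊤)
    (N : Subgroup G) [N.Normal] (hN : N.FiniteIndex) :
    minNormalGens N ≤ relNum (fun i => (QuotientGroup.mk (t i) : G ⧸ N)) := by
  set π : FreeGroup (Fin d) →* G := FreeGroup.lift t with hπ
  have hsurj : Function.Surjective π := by
    rw [← MonoidHom.range_eq_top, hπ, FreeGroup.range_lift_eq_closure, ht]
  -- identify the kernel
  have hcomp : FreeGroup.lift (fun i => (QuotientGroup.mk (t i) : G ⧸ N))
      = (QuotientGroup.mk' N).comp π := by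
    apply FreeGroup.ext_hom
    intro i
    simp [hπ]
  set K : Subgroup (FreeGroup (Fin d)) :=
    (FreeGroup.lift fun i => (QuotientGroup.mk (t i) : G ⧸ N)).ker with hK
  have hKcomap : K = N.comap π := by
    rw [hK, hcomp, ← MonoidHom.comap_ker, QuotientGroup.ker_mk']
  have hmapK : K.map π = N := by
    rw [hKcomap, Subgroup.map_comap_eq_self_of_surjective hsurj]
  -- the defining set of relNum is nonempty
  haveI : K.FiniteIndex := by
    constructor
    rw [hKcomap, Subgroup.index_comap_of_surjective _ hsurj]
    exact hN.index_ne_zero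
  haveI : Group.FG (FreeGroup (Fin d)) := by
    refine Group.fg_iff.mpr ⟨Set.range FreeGroup.of, ?_, Set.finite_range _⟩
    exact FreeGroup.closure_range_of (Fin d)
  haveI : K.FG := (Group.fg_iff_subgroup_fg K).mp inferInstance
  haveI : K.Normal := MonoidHom.normal_ker _
  have hne : {n : ℕ | ∃ S : Finset (FreeGroup (Fin d)), S.card = n ∧
      ↑S ⊆ (K : Set (FreeGroup (Fin d))) ∧
      Subgroup.normalClosure (S : Set (FreeGroup (Fin d))) = K}.Nonempty := by
    obtain ⟨S, hS⟩ := ‹K.FG›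
    refine ⟨S.card, S, rfl, ?_, ?_⟩
    · rw [← hS]; exact Subgroup.subset_closure
    · apply le_antisymm
      · exact Subgroup.normalClosure_le_normal (by rw [← hS]; exact Subgroup.subset_closure)
      · rw [← hS]
        exact Subgroup.closure_le_normalClosure
  obtain ⟨S, hcard, hsub, hclos⟩ := Nat.sInf_mem hne
  -- push forward
  classical
  have hmem : (S.image π).card ∈ {n : ℕ | ∃ S' : Finset G, S'.card = n ∧ ↑S' ⊆ (N : Set G) ∧
      Subgroup.normalClosure (S' : Set G) = N} := by
    refine ⟨S.image π, rfl, ?_, ?_⟩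
    · intro x hx
      simp only [Finset.coe_image, Set.mem_image] at hx
      obtain ⟨y, hy, rfl⟩ := hx
      have : y ∈ K := hsub hy
      rw [hKcomap] at this
      exact this
    · rw [Finset.coe_image, ← Subgroup.map_normalClosure _ _ hsurj, hclos, hmapK]
  calc minNormalGens N ≤ (S.image π).card := Nat.sInf_le hmem
    _ ≤ S.card := Finset.card_image_le
    _ = relNum (fun i => (QuotientGroup.mk (t i) : G ⧸ N)) := hcard
end

section
/- Let E be a finite group, let F be a free group, let φ : F → E be a surjective homomorphism, and set N = Ker φ. Then the index [[F,F] : [F,N]] of [F,N] in [F,F] satisfies [[F,F] : [F,N]] ≤ |E|^{1 + log₂ |E|}. -/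
/-!
With `N = ker φ`, the group `G = F ⧸ [F, N]` is a central extension of `E`: the kernel `N ⧸ [F, N]`
of `G → E` is central, and `[[F, F] : [F, N]] = |[G, G]|`. For a central extension `ψ : G → E` of a
finite group, `|[G, G]| = |ker ψ ∩ [G, G]| · |ψ [G, G]|`, and the central factor is finite by
Schur's theorem. Fix a prime `p`, a Sylow `p`-subgroup `P` of `E` and `P̃ = ψ⁻¹ P`. The transfer
`G → P̃ᵃᵇ` kills `[G, G]` and is `x ↦ x ^ [G : P̃]` on central elements, so every `p`-element of
`ker ψ ∩ [G, G]` lies in `[P̃, P̃]`. Hence the `p`-part of `|ker ψ ∩ [G, G]|` is at most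
`|[P̃, P̃]|`, and `P̃ → P` is again a central extension.

For a central extension `ψ : G → Q` of a `p`-group, `|[G, G]| ≤ |Q| ^ log₂ |Q|` by induction on
`|Q|`: if `M ⊴ Q` has index `p` and `K = ψ⁻¹ M`, then `G ⧸ K` is cyclic, generated by some `t`, and
modulo `[K, K]` the commutator subgroup of `G` is the image of the homomorphism `k ↦ [k, t]` on `K`,
which kills the central subgroup `ker ψ`. Hence `|[G, G]| ≤ |[K, K]| · |M|` with `2 |M| ≤ |Q|`.
Applied to `P̃ → P`, this bounds the `p`-part of `|ker ψ ∩ [G, G]|` by `|P| ^ log₂ |E|`.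
-/

open Subgroup
open scoped commutatorElement

section CommutatorBounds

variable {G : Type*} [Group G]

theorem commutatorElement_mul_left_of_commute {a b c : G} (hab : Commute a ⁅b, c⁆)
    (hc : Commute ⁅a, c⁆ ⁅b, c⁆) : ⁅a * b, c⁆ = ⁅a, c⁆ * ⁅b, c⁆ := by
  calc ⁅a * b, c⁆ = a * ⁅b, c⁆ * a⁻¹ * ⁅a, c⁆ := by simp only [commutatorElement_def]; group
    _ = ⁅a, c⁆ * ⁅b, c⁆ := by rw [hab.mul_inv_cancel, hc.eq]

theorem commutatorElement_mul_right_of_commute {a b c : G} (hab : Commute a b)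
    (hc : Commute b ⁅a, c⁆) : ⁅a, b * c⁆ = ⁅a, c⁆ := by
  calc ⁅a, b * c⁆ = a * b * a⁻¹ * ⁅a, c⁆ * b⁻¹ := by simp only [commutatorElement_def]; group
    _ = ⁅a, c⁆ := by rw [hab.mul_inv_cancel, hc.mul_inv_cancel]

theorem commutatorElement_mul_left_of_mem_center {z : G} (hz : z ∈ center G) (a b : G) :
    ⁅a * z, b⁆ = ⁅a, b⁆ := by
  simp only [commutatorElement_def, mul_inv_rev, mul_assoc, ← mem_center_iff.mp hz b,
    mul_inv_cancel_left]

theorem commutatorElement_mul_right_of_mem_center {z : G} (hz : z ∈ center G) (a b : G) :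
    ⁅a, b * z⁆ = ⁅a, b⁆ := by
  simp only [commutatorElement_def, mul_inv_rev, mul_assoc, ← mem_center_iff.mp hz a⁻¹,
    mul_inv_cancel_left]

theorem QuotientGroup.mk_commutatorElement (N : Subgroup G) [N.Normal] (a b : G) :
    ((⁅a, b⁆ : G) : G ⧸ N) = ⁅(a : G ⧸ N), (b : G ⧸ N)⁆ :=
  map_commutatorElement (QuotientGroup.mk' N) a b

theorem QuotientGroup.exists_forall_eq_mul_zpow (K : Subgroup G) [K.Normal] [IsCyclic (G ⧸ K)] :
    ∃ t : G, ∀ g : G, ∃ k ∈ K, ∃ j : ℤ, g = k * t ^ j := by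
  obtain ⟨x, hx⟩ := IsCyclic.exists_generator (α := G ⧸ K)
  obtain ⟨t, rfl⟩ := QuotientGroup.mk_surjective x
  refine ⟨t, fun g => ?_⟩
  obtain ⟨j, hj⟩ := mem_zpowers_iff.mp (hx g)
  refine ⟨g * t ^ (-j), ?_, j, by group⟩
  rw [← QuotientGroup.eq_one_iff, QuotientGroup.mk_mul, QuotientGroup.mk_zpow, ← hj, zpow_neg,
    mul_inv_cancel]

theorem Subgroup.card_eq_card_inf_ker_mul_card_map {G' : Type*} [Group G'] (f : G →* G')
    (H : Subgroup G) : Nat.card H = Nat.card ↥(f.ker ⊓ H) * Nat.card (H.map f) := by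
  rw [← relIndex_ker, ← card_mul_index (f.ker.subgroupOf H), ← subgroupOf_map_subtype,
    card_map_of_injective H.subtype_injective]
  rfl

theorem map_commutator_of_surjective {G' : Type*} [Group G'] {f : G →* G'}
    (hf : Function.Surjective f) : (commutator G).map f = commutator G' := by
  rw [map_commutator_eq, f.range_eq_top_of_surjective hf, commutator_def]

theorem Subgroup.relIndex_commutator_eq_card_commutator_quotient (N : Subgroup G) [N.Normal] :
    N.relIndex (_root_.commutator G) = Nat.card (_root_.commutator (G ⧸ N)) := by
  have h := relIndex_ker (K := _root_.commutator G) (QuotientGroup.mk' N)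
  rwa [QuotientGroup.ker_mk', map_commutator_of_surjective (QuotientGroup.mk'_surjective N)] at h

theorem Subgroup.map_mk'_le_center (N : Subgroup G) [N.Normal] :
    N.map (QuotientGroup.mk' ⁅(⊤ : Subgroup G), N⁆) ≤ center (G ⧸ ⁅(⊤ : Subgroup G), N⁆) := by
  rintro _ ⟨n, hn, rfl⟩
  refine mem_center_iff.mpr fun g => ?_
  obtain ⟨g, rfl⟩ := QuotientGroup.mk_surjective g
  rw [← commutatorElement_eq_one_iff_mul_comm, QuotientGroup.mk'_apply,
    ← QuotientGroup.mk_commutatorElement, QuotientGroup.eq_one_iff]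
  exact commutator_mem_commutator (mem_top g) hn

theorem MonoidHom.ker_subgroupComap_le_center {Q : Type*} [Group Q] {ψ : G →* Q}
    (hψ : ψ.ker ≤ center G) (H : Subgroup Q) : (ψ.subgroupComap H).ker ≤ center (H.comap ψ) := by
  intro k hk
  have hk' : (k : G) ∈ center G := hψ (congrArg Subtype.val hk)
  exact mem_center_iff.mpr fun b => Subtype.ext (mem_center_iff.mp hk' b)

section CyclicQuotient

variable {K : Subgroup G} [K.Normal]

theorem commute_mk_of_mem {a b : G} (ha : a ∈ K) (hb : b ∈ K) :
    Commute (a : G ⧸ ⁅K, K⁆) (b : G ⧸ ⁅K, K⁆) := by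
  rw [← commutatorElement_eq_one_iff_commute, ← QuotientGroup.mk_commutatorElement,
    QuotientGroup.eq_one_iff]
  exact commutator_mem_commutator ha hb

theorem commutatorElement_mem_of_mem_left {a : G} (ha : a ∈ K) (b : G) : ⁅a, b⁆ ∈ K :=
  commutator_le_left K ⊤ (commutator_mem_commutator ha (mem_top b))

variable (K) in
def commutatorRightHom (t : G) : K →* G ⧸ ⁅K, K⁆ where
  toFun k := ((⁅(k : G), t⁆ : G) : G ⧸ ⁅K, K⁆)
  map_one' := by simp
  map_mul' x y := by
    have hx := commutatorElement_mem_of_mem_left x.2 t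
    have hy := commutatorElement_mem_of_mem_left y.2 t
    simp only [coe_mul, QuotientGroup.mk_commutatorElement, QuotientGroup.mk_mul]
    apply commutatorElement_mul_left_of_commute
    · rw [← QuotientGroup.mk_commutatorElement]
      exact commute_mk_of_mem x.2 hy
    · rw [← QuotientGroup.mk_commutatorElement, ← QuotientGroup.mk_commutatorElement]
      exact commute_mk_of_mem hx hy

theorem commutatorRightHom_apply (t : G) (k : K) :
    commutatorRightHom K t k = ((⁅(k : G), t⁆ : G) : G ⧸ ⁅K, K⁆) :=
  rfl

theorem commutatorRightHom_conj (hK : commutator G ≤ K) (t g : G) (k : K) :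
    commutatorRightHom K t ⟨g * k * g⁻¹, Normal.conj_mem inferInstance _ k.2 g⟩ =
      (g : G ⧸ ⁅K, K⁆) * commutatorRightHom K t k * (g : G ⧸ ⁅K, K⁆)⁻¹ := by
  have hgt : ⁅g, t⁆ ∈ K := hK (commutator_mem_commutator (mem_top g) (mem_top t))
  have hconj : g * k * g⁻¹ ∈ K := Normal.conj_mem inferInstance _ k.2 g
  have ht : g * t * g⁻¹ = ⁅g, t⁆ * t := by group
  rw [commutatorRightHom_apply, commutatorRightHom_apply, ← QuotientGroup.mk_inv,
    ← QuotientGroup.mk_mul, ← QuotientGroup.mk_mul, conjugate_commutatorElement, ht,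
    QuotientGroup.mk_commutatorElement, QuotientGroup.mk_commutatorElement, QuotientGroup.mk_mul]
  refine (commutatorElement_mul_right_of_commute (commute_mk_of_mem hconj hgt) ?_).symm
  rw [← QuotientGroup.mk_commutatorElement]
  exact commute_mk_of_mem hgt (commutatorElement_mem_of_mem_left hconj t)

theorem normal_range_commutatorRightHom (hK : commutator G ≤ K) (t : G) :
    (commutatorRightHom K t).range.Normal where
  conj_mem := by
    rintro _ ⟨k, rfl⟩ g
    obtain ⟨g, rfl⟩ := QuotientGroup.mk_surjective g
    exact ⟨_, commutatorRightHom_conj hK t g k⟩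

theorem commutator_le_range_commutatorRightHom (hK : commutator G ≤ K) {t : G}
    (hKt : ∀ g : G, ∃ k ∈ K, ∃ j : ℤ, g = k * t ^ j) :
    commutator (G ⧸ ⁅K, K⁆) ≤ (commutatorRightHom K t).range := by
  have := normal_range_commutatorRightHom hK t
  set W := (commutatorRightHom K t).range
  set π : G →* (G ⧸ ⁅K, K⁆) ⧸ W := (QuotientGroup.mk' W).comp (QuotientGroup.mk' ⁅K, K⁆)
  have hπ : Function.Surjective π :=
    (QuotientGroup.mk'_surjective W).comp (QuotientGroup.mk'_surjective ⁅K, K⁆)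
  have hKK {a b : G} (ha : a ∈ K) (hb : b ∈ K) : Commute (π a) (π b) :=
    (commute_mk_of_mem ha hb).map (QuotientGroup.mk' W)
  have hKt' {a : G} (ha : a ∈ K) : Commute (π a) (π t) := by
    rw [← commutatorElement_eq_one_iff_commute, ← map_commutatorElement, MonoidHom.comp_apply,
      QuotientGroup.mk'_apply, QuotientGroup.mk'_apply, QuotientGroup.eq_one_iff]
    exact ⟨⟨a, ha⟩, rfl⟩
  rw [← Normal.quotient_commutative_iff_commutator_le]
  refine ⟨⟨fun x y => ?_⟩⟩
  obtain ⟨g₁, rfl⟩ := hπ x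
  obtain ⟨g₂, rfl⟩ := hπ y
  obtain ⟨k₁, hk₁, j₁, rfl⟩ := hKt g₁
  obtain ⟨k₂, hk₂, j₂, rfl⟩ := hKt g₂
  simp only [map_mul, map_zpow]
  exact ((hKK hk₁ hk₂).mul_right ((hKt' hk₁).zpow_right j₂)).mul_left
    (((hKt' hk₂).symm.mul_right ((Commute.refl _).zpow_right j₂)).zpow_left j₁)

theorem card_range_commutatorRightHom_dvd {A : Subgroup G} (hA : A ≤ center G) (t : G) :
    Nat.card (commutatorRightHom K t).range ∣ A.relIndex K := by
  rw [← index_ker]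
  refine index_dvd_of_le fun a ha => ?_
  have hat : ⁅(a : G), t⁆ = 1 :=
    commutatorElement_eq_one_iff_commute.mpr (mem_center_iff.mp (hA ha) t).symm
  rw [MonoidHom.mem_ker, commutatorRightHom_apply, hat, QuotientGroup.mk_one]

theorem card_commutator_dvd_of_isCyclic [IsCyclic (G ⧸ K)] {A : Subgroup G} (hA : A ≤ center G) :
    Nat.card (commutator G) ∣ Nat.card ↥⁅K, K⁆ * A.relIndex K := by
  obtain ⟨t, hKt⟩ := QuotientGroup.exists_forall_eq_mul_zpow K
  have hK : commutator G ≤ K := Normal.quotient_commutative_iff_commutator_le.mp inferInstance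
  have hKK : ⁅K, K⁆ ≤ commutator G := commutator_mono le_top le_top
  rw [card_eq_card_inf_ker_mul_card_map (QuotientGroup.mk' ⁅K, K⁆), QuotientGroup.ker_mk',
    inf_of_le_left hKK, map_commutator_of_surjective (QuotientGroup.mk'_surjective _)]
  exact mul_dvd_mul_left _ ((card_dvd_of_le (commutator_le_range_commutatorRightHom hK hKt)).trans
    (card_range_commutatorRightHom_dvd hA t))

end CyclicQuotient

section PGroup

variable {Q : Type*} [Group Q]

theorem IsPGroup.exists_normal_index_eq {p : ℕ} (hp : p.Prime) [Finite Q] [Nontrivial Q]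
    (hQ : IsPGroup p Q) : ∃ M : Subgroup Q, M.Normal ∧ M.index = p := by
  have := Fact.mk hp
  obtain ⟨n, hn⟩ := IsPGroup.iff_card.mp hQ
  obtain ⟨m, rfl⟩ : ∃ m, n = m + 1 :=
    Nat.exists_eq_add_one.mpr (Nat.pos_of_ne_zero fun h =>
      (Finite.one_lt_card (α := Q)).ne' (by rw [hn, h, pow_zero]))
  obtain ⟨M, hM⟩ := Sylow.exists_subgroup_card_pow_prime p (hn ▸ pow_dvd_pow p m.le_succ)
  have hindex : M.index = p := by
    have := M.card_mul_index
    rw [hM, hn, pow_succ] at this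
    exact Nat.eq_of_mul_eq_mul_left (pow_pos hp.pos m) this
  exact ⟨M, normal_of_index_eq_minFac_card (by rw [hindex, hn, hp.pow_minFac m.succ_ne_zero]),
    hindex⟩

theorem Nat.pow_log_mul_le_pow_log_of_two_mul_le {m n : ℕ} (hm : m ≠ 0) (hmn : 2 * m ≤ n) :
    m ^ Nat.log 2 m * m ≤ n ^ Nat.log 2 n := by
  have hlog : Nat.log 2 m + 1 ≤ Nat.log 2 n := by
    rw [← Nat.log_mul_base one_lt_two hm]
    exact Nat.log_mono_right (by omega)
  calc m ^ Nat.log 2 m * m = m ^ (Nat.log 2 m + 1) := (pow_succ m _).symm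
    _ ≤ n ^ (Nat.log 2 m + 1) := Nat.pow_le_pow_left (by omega) _
    _ ≤ n ^ Nat.log 2 n := Nat.pow_le_pow_right (by omega) hlog

theorem card_commutator_le_of_isPGroup {p : ℕ} (hp : p.Prime) [Finite Q] (hQ : IsPGroup p Q)
    (ψ : G →* Q) (hψ : Function.Surjective ψ) (hker : ψ.ker ≤ center G) :
    Nat.card (commutator G) ≤ Nat.card Q ^ Nat.log 2 (Nat.card Q) := by
  induction hn : Nat.card Q using Nat.strong_induction_on generalizing G Q with
  | _ n ih =>
  subst hn
  rcases subsingleton_or_nontrivial Q with _ | _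
  · have : center G = ⊤ := top_le_iff.mp fun g _ => hker (Subsingleton.elim _ _)
    rw [(commutator_eq_bot_iff_center_eq_top G).mpr this, card_bot]
    exact Nat.one_le_pow _ _ Nat.card_pos
  rcases eq_or_ne (Nat.card (commutator G)) 0 with h0 | h0
  · exact h0 ▸ Nat.zero_le _
  have := Fact.mk hp
  obtain ⟨M, hM, hMp⟩ := hQ.exists_normal_index_eq hp
  set K := M.comap ψ
  have : IsCyclic (G ⧸ K) := isCyclic_of_prime_card <| by
    rw [← index_eq_card, index_comap_of_surjective M hψ, hMp]
  have hstep := card_commutator_dvd_of_isCyclic (K := K) hker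
  rw [relIndex_ker, map_comap_eq_self_of_surjective hψ] at hstep
  have hM2 : 2 * Nat.card M ≤ Nat.card Q := by
    rw [← M.card_mul_index, hMp, mul_comm]
    exact Nat.mul_le_mul_left _ hp.two_le
  have hKK : Nat.card ↥⁅K, K⁆ ≤ Nat.card M ^ Nat.log 2 (Nat.card M) := by
    rw [← map_subtype_commutator, card_map_of_injective K.subtype_injective]
    exact ih _ (by have := Nat.card_pos (α := M); omega) (hQ.to_subgroup M) (ψ.subgroupComap M)
      (ψ.subgroupComap_surjective_of_surjective M hψ) (ψ.ker_subgroupComap_le_center hker M) rfl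
  have hpos : Nat.card ↥⁅K, K⁆ * Nat.card M ≠ 0 :=
    mul_ne_zero (ne_zero_of_dvd_ne_zero h0 (card_dvd_of_le (commutator_mono le_top le_top)))
      Nat.card_pos.ne'
  calc Nat.card (commutator G) ≤ Nat.card ↥⁅K, K⁆ * Nat.card M := Nat.le_of_dvd (by omega) hstep
    _ ≤ Nat.card M ^ Nat.log 2 (Nat.card M) * Nat.card M := Nat.mul_le_mul_right _ hKK
    _ ≤ _ := Nat.pow_log_mul_le_pow_log_of_two_mul_le Nat.card_pos.ne' hM2

end PGroup

theorem mem_commutator_of_mem_center_of_coprime {H : Subgroup G} [H.FiniteIndex] {x : G}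
    (hxZ : x ∈ center G) (hx : x ∈ commutator G) (hcop : H.index.Coprime (orderOf x)) :
    x ∈ ⁅H, H⁆ := by
  have key (k : ℕ) (g : G) (_ : g⁻¹ * x ^ k * g ∈ H) : g⁻¹ * x ^ k * g = x ^ k := by
    rw [mem_center_iff.mp (pow_mem hxZ k) g⁻¹, inv_mul_cancel_right]
  have hV : MonoidHom.transfer (Abelianization.of (G := H)) x = 1 :=
    Abelianization.commutator_subset_ker _ hx
  rw [MonoidHom.transfer_eq_pow _ x key] at hV
  have hpow : x ^ H.index ∈ ⁅H, H⁆ := by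
    rw [← map_subtype_commutator]
    exact ⟨_, (QuotientGroup.eq_one_iff _).mp hV, rfl⟩
  obtain ⟨m, hm⟩ := exists_pow_eq_self_of_coprime hcop
  exact hm ▸ pow_mem hpow m

theorem finite_commutatorSet_of_finiteIndex_center [(center G).FiniteIndex] :
    Finite (commutatorSet G) := by
  let f : (G ⧸ center G) × (G ⧸ center G) → G := fun q =>
    Quotient.lift₂ (fun a b => ⁅a, b⁆) (fun a₁ b₁ a₂ b₂ ha hb => by
      rw [← mul_inv_cancel_left a₁ a₂, ← mul_inv_cancel_left b₁ b₂,
        commutatorElement_mul_left_of_mem_center (QuotientGroup.leftRel_apply.mp ha),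
        commutatorElement_mul_right_of_mem_center (QuotientGroup.leftRel_apply.mp hb)]) q.1 q.2
  refine ((Set.finite_range f).subset ?_).to_subtype
  rintro _ ⟨a, b, rfl⟩
  exact ⟨(a, b), rfl⟩

section CentralExtension

variable {E : Type*} [Group E] [Finite E] {ψ : G →* E}

theorem finite_commutator_of_ker_le_center (hker : ψ.ker ≤ center G) : Finite (commutator G) :=
  have : (center G).FiniteIndex := finiteIndex_of_le hker
  have := finite_commutatorSet_of_finiteIndex_center (G := G)
  inferInstance

theorem mem_commutator_comap_sylow (hψ : Function.Surjective ψ) (hker : ψ.ker ≤ center G)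
    {p : ℕ} [Fact p.Prime] (P : Sylow p E) {x : G} (hx : x ∈ ψ.ker ⊓ commutator G) {k : ℕ}
    (hxp : x ^ p ^ k = 1) : x ∈ ⁅(P : Subgroup E).comap ψ, (P : Subgroup E).comap ψ⁆ := by
  have hindex : ((P : Subgroup E).comap ψ).index = (P : Subgroup E).index :=
    index_comap_of_surjective _ hψ
  have : ((P : Subgroup E).comap ψ).FiniteIndex := ⟨hindex ▸ index_ne_zero_of_finite⟩
  refine mem_commutator_of_mem_center_of_coprime (hker hx.1) hx.2 ?_
  refine Nat.Coprime.coprime_dvd_right (orderOf_dvd_of_pow_eq_one hxp) ?_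
  rw [hindex]
  exact ((Nat.Prime.coprime_iff_not_dvd Fact.out).mpr P.not_dvd_index).symm.pow_right k

theorem factorization_card_ker_inf_commutator_le (hψ : Function.Surjective ψ)
    (hker : ψ.ker ≤ center G) {p : ℕ} (hp : p.Prime) :
    (Nat.card ↥(ψ.ker ⊓ commutator G)).factorization p ≤
      Nat.log 2 (Nat.card E) * (Nat.card E).factorization p := by
  have := Fact.mk hp
  have := finite_commutator_of_ker_le_center hker
  set M := ψ.ker ⊓ commutator G
  have : Finite M := Finite.Set.subset (commutator G : Set G) inf_le_right
  let S : Sylow p M := default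
  let P : Sylow p E := default
  set Pt := (P : Subgroup E).comap ψ
  have : Finite ↥⁅Pt, Pt⁆ := Finite.Set.subset (commutator G : Set G) (commutator_mono le_top le_top)
  have hSPt : (S : Subgroup M).map M.subtype ≤ ⁅Pt, Pt⁆ := by
    rintro _ ⟨s, hs, rfl⟩
    obtain ⟨k, hk⟩ := S.isPGroup' ⟨s, hs⟩
    exact mem_commutator_comap_sylow hψ hker P s.2
      (by simpa using congrArg (fun x : S => ((x : M) : G)) hk)
  have hPtPt : Nat.card ↥⁅Pt, Pt⁆ ≤ Nat.card P ^ Nat.log 2 (Nat.card P) := by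
    rw [← map_subtype_commutator, card_map_of_injective Pt.subtype_injective]
    exact card_commutator_le_of_isPGroup hp P.isPGroup' (ψ.subgroupComap P)
      (ψ.subgroupComap_surjective_of_surjective P hψ) (ψ.ker_subgroupComap_le_center hker P)
  rw [← Nat.pow_le_pow_iff_right hp.one_lt, pow_mul', ← Sylow.card_eq_multiplicity S,
    ← Sylow.card_eq_multiplicity P]
  calc Nat.card S = Nat.card ↥((S : Subgroup M).map M.subtype) :=
        (card_map_of_injective M.subtype_injective).symm
    _ ≤ Nat.card ↥⁅Pt, Pt⁆ := card_le_of_le hSPt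
    _ ≤ Nat.card P ^ Nat.log 2 (Nat.card P) := hPtPt
    _ ≤ Nat.card P ^ Nat.log 2 (Nat.card E) :=
        Nat.pow_le_pow_right Nat.card_pos (Nat.log_mono_right (P : Subgroup E).card_le_card_group)

theorem card_ker_inf_commutator_dvd (hψ : Function.Surjective ψ) (hker : ψ.ker ≤ center G) :
    Nat.card ↥(ψ.ker ⊓ commutator G) ∣ Nat.card E ^ Nat.log 2 (Nat.card E) := by
  have := finite_commutator_of_ker_le_center hker
  have : Finite ↥(ψ.ker ⊓ commutator G) := Finite.Set.subset (commutator G : Set G) inf_le_right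
  rw [← Nat.factorization_le_iff_dvd Nat.card_pos.ne' (pow_ne_zero _ Nat.card_pos.ne'),
    Nat.factorization_pow, Finsupp.le_def]
  intro p
  by_cases hp : p.Prime
  · exact factorization_card_ker_inf_commutator_le hψ hker hp
  · simp only [Nat.factorization_eq_zero_of_not_prime _ hp, Finsupp.smul_apply, smul_zero, le_refl]

theorem card_commutator_le_of_ker_le_center (hψ : Function.Surjective ψ)
    (hker : ψ.ker ≤ center G) :
    Nat.card (commutator G) ≤ Nat.card E ^ (1 + Nat.log 2 (Nat.card E)) := by
  have := finite_commutator_of_ker_le_center hker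
  have : Finite ↥(ψ.ker ⊓ commutator G) := Finite.Set.subset (commutator G : Set G) inf_le_right
  calc Nat.card (commutator G)
      = Nat.card ↥(ψ.ker ⊓ commutator G) * Nat.card ((commutator G).map ψ) :=
        card_eq_card_inf_ker_mul_card_map ψ _
    _ ≤ Nat.card E ^ Nat.log 2 (Nat.card E) * Nat.card E :=
        Nat.mul_le_mul (Nat.le_of_dvd (Nat.pos_of_ne_zero (pow_ne_zero _ Nat.card_pos.ne'))
          (card_ker_inf_commutator_dvd hψ hker)) (card_le_card_group _)
    _ = Nat.card E ^ (1 + Nat.log 2 (Nat.card E)) := by ring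

end CentralExtension

end CommutatorBounds

/-- given a free presentation `1 → N → F → E → 1` of a finite group `E`
(with `F = FreeGroup α` free and `N = ker φ`), the index of `[F,N]` in `[F,F]` is
finite and at most `|E| ^ (1 + log₂ |E|)`. -/
theorem stmt6 {α : Type*} {E : Type*} [Group E] [Finite E]
    (φ : FreeGroup α →* E) (hφ : Function.Surjective φ) :
    0 < ⁅(⊤ : Subgroup (FreeGroup α)), φ.ker⁆.relIndex (commutator (FreeGroup α)) ∧
    ((⁅(⊤ : Subgroup (FreeGroup α)), φ.ker⁆.relIndex (commutator (FreeGroup α)) : ℝ) ≤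
      (Nat.card E : ℝ) ^ (1 + Real.logb 2 (Nat.card E))) := by
  have hT : ⁅(⊤ : Subgroup (FreeGroup α)), φ.ker⁆ ≤ φ.ker := commutator_le_right _ _
  set ψ := QuotientGroup.lift _ φ hT
  have hψ : Function.Surjective ψ := QuotientGroup.lift_surjective_of_surjective _ φ hφ hT
  have hker : ψ.ker ≤ center _ := (QuotientGroup.ker_lift _ φ hT).trans_le (map_mk'_le_center _)
  have := finite_commutator_of_ker_le_center hker
  rw [relIndex_commutator_eq_card_commutator_quotient]
  refine ⟨Nat.card_pos, ?_⟩
  calc (Nat.card (commutator _) : ℝ) ≤ (Nat.card E : ℝ) ^ (1 + Nat.log 2 (Nat.card E)) := by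
        exact_mod_cast card_commutator_le_of_ker_le_center hψ hker
    _ = (Nat.card E : ℝ) ^ ((1 + Nat.log 2 (Nat.card E) : ℕ) : ℝ) := by
        rw [Real.rpow_natCast]
    _ ≤ (Nat.card E : ℝ) ^ (1 + Real.logb 2 (Nat.card E)) := by
        refine Real.rpow_le_rpow_of_exponent_le (Nat.one_le_cast.mpr Nat.card_pos) ?_
        push_cast
        gcongr
        exact_mod_cast Real.natLog_le_logb (Nat.card E) 2
end

section
/- Let A and B be finitely generated groups, let G = A × B, and let H be a finite index subgroup of G. Then d(H) ≤ d(G)·([G : AH] + [AH : H]), where A is identified with A × {1} and AH denotes the subgroup {ah : a ∈ A, h ∈ H} of G. -/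
/-!
Since `A × {1}` is normal, `N := (A × {1}) ∩ H` is normal in `H`, so `d(H) ≤ d(N) + d(H / N)`.
By Schreier, `d(N) ≤ [A × {1} : N] · d(A) ≤ [AH : H] · d(G)`; and `H / N ≅ AH / (A × {1})` is a
quotient of `AH`, so `d(H / N) ≤ d(AH) ≤ [G : AH] · d(G)`, again by Schreier.
-/

/-- `d K` is the least cardinality of a (finite) generating set of the group `K`. -/
noncomputable def minGens (K : Type*) [Group K] : ℕ :=
  sInf {n : ℕ | ∃ S : Finset K, S.card = n ∧ Subgroup.closure (S : Set K) = ⊤}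

theorem minGens_eq_rank (K : Type*) [Group K] [h : Group.FG K] : minGens K = Group.rank K :=
  Nat.sInf_def (Group.fg_iff'.mp h)

open Subgroup

namespace Group

theorem rank_le_rank_add_rank_quotient {G : Type*} [Group G] [FG G] (N : Subgroup G) [N.Normal]
    [FG N] : rank G ≤ rank N + rank (G ⧸ N) := by
  classical
  obtain ⟨S, hS, hSgen⟩ := rank_spec N
  obtain ⟨T, hT, hTgen⟩ := rank_spec (G ⧸ N)
  set U := S.image N.subtype ∪ T.image Quotient.out
  have hN : N ≤ closure (U : Set G) :=
    calc N = (closure (S : Set N)).map N.subtype := by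
          rw [hSgen, ← MonoidHom.range_eq_map, range_subtype]
      _ ≤ closure (U : Set G) := by
        rw [MonoidHom.map_closure]
        exact closure_mono (by simp [U, Set.subset_union_left])
  have hmap : (closure (U : Set G)).map (QuotientGroup.mk' N) = ⊤ := by
    rw [MonoidHom.map_closure, eq_top_iff, ← hTgen]
    refine closure_mono fun t ht => ⟨t.out, ?_, QuotientGroup.out_eq' t⟩
    simp only [U, Finset.coe_union, Finset.coe_image]
    exact Or.inr ⟨t, ht, rfl⟩
  have hU : closure (U : Set G) = ⊤ := by
    have := comap_map_eq_self (f := QuotientGroup.mk' N) (H := closure (U : Set G))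
      (by rwa [QuotientGroup.ker_mk'])
    rwa [hmap, comap_top, eq_comm] at this
  calc rank G ≤ U.card := rank_le hU
    _ ≤ (S.image N.subtype).card + (T.image Quotient.out).card := Finset.card_union_le _ _
    _ ≤ rank N + rank (G ⧸ N) := hS ▸ hT ▸ add_le_add Finset.card_image_le Finset.card_image_le

end Group

namespace MonoidHom

variable (A B : Type*) [Group A] [Group B]

theorem range_inl : (inl A B).range = (⊤ : Subgroup A).prod ⊥ := by
  ext ⟨a, b⟩
  simp [Subgroup.mem_prod, eq_comm]

instance normal_range_inl : (inl A B).range.Normal :=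
  range_inl A B ▸ inferInstance

end MonoidHom

namespace Subgroup

variable {G : Type*} [Group G]

def subgroupOfEquivSubgroupOf (H K : Subgroup G) : H.subgroupOf K ≃* K.subgroupOf H :=
  ((MulEquiv.subgroupCongr (inf_subgroupOf_left H K).symm).trans
      (subgroupOfEquivOfLe inf_le_left)).trans
    ((MulEquiv.subgroupCongr (inf_subgroupOf_right K H).symm).trans
      (subgroupOfEquivOfLe inf_le_right)).symm

theorem rank_le_relIndex_mul_rank_add_index_mul_rank [Group.FG G] (N H : Subgroup G) [N.Normal]
    [Group.FG N] [H.FiniteIndex] :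
    Group.rank H ≤ H.relIndex N * Group.rank N + (N ⊔ H).index * Group.rank G := by
  have : Group.FG (N.subgroupOf H) :=
    Group.fg_of_surjective (f := (subgroupOfEquivSubgroupOf H N).toMonoidHom)
      (subgroupOfEquivSubgroupOf H N).surjective
  have : (H ⊔ N).FiniteIndex := finiteIndex_of_le le_sup_left
  have hker : Group.rank (N.subgroupOf H) ≤ H.relIndex N * Group.rank N :=
    calc Group.rank (N.subgroupOf H) = Group.rank (H.subgroupOf N) :=
          (Group.rank_congr (subgroupOfEquivSubgroupOf H N)).symm
      _ ≤ H.relIndex N * Group.rank N := rank_le_index_mul_rank _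
  have hquot : Group.rank (H ⧸ N.subgroupOf H) ≤ (N ⊔ H).index * Group.rank G :=
    calc Group.rank (H ⧸ N.subgroupOf H)
        = Group.rank ((H ⊔ N : Subgroup G) ⧸ N.subgroupOf (H ⊔ N)) :=
          Group.rank_congr (QuotientGroup.quotientInfEquivProdNormalQuotient H N)
      _ ≤ Group.rank (H ⊔ N : Subgroup G) :=
          Group.rank_le_of_surjective _ (QuotientGroup.mk'_surjective _)
      _ ≤ (H ⊔ N).index * Group.rank G := rank_le_index_mul_rank _
      _ = (N ⊔ H).index * Group.rank G := by rw [sup_comm]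
  calc Group.rank H ≤ Group.rank (N.subgroupOf H) + Group.rank (H ⧸ N.subgroupOf H) :=
        Group.rank_le_rank_add_rank_quotient _
    _ ≤ _ := add_le_add hker hquot

end Subgroup

/-- for finitely generated groups `A`, `B`, `G = A × B`, and a finite index
subgroup `H ≤ G`, we have `d(H) ≤ d(G) · ([G : AH] + [AH : H])`, where
`AH = (A × {1}) ⊔ H` (which equals the set `{ah : a ∈ A, h ∈ H}` since `A × {1} ⊴ G`). -/
theorem stmt8 {A B : Type*} [Group A] [Group B] [Group.FG A] [Group.FG B]
    (H : Subgroup (A × B)) (hH : H.FiniteIndex) :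
    minGens H ≤ minGens (A × B) *
      (((MonoidHom.inl A B).range ⊔ H).index +
        H.relIndex ((MonoidHom.inl A B).range ⊔ H)) := by
  set N := (MonoidHom.inl A B).range
  have hN : Group.rank N ≤ Group.rank (A × B) :=
    Group.rank_range_le.trans
      (Group.rank_le_of_surjective (MonoidHom.fst A B) Prod.fst_surjective)
  have hrel : H.relIndex N ≤ H.relIndex (N ⊔ H) :=
    relIndex_le_of_le_right le_sup_left FiniteIndex.index_ne_zero
  rw [minGens_eq_rank, minGens_eq_rank]
  calc Group.rank H ≤ H.relIndex N * Group.rank N + (N ⊔ H).index * Group.rank (A × B) :=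
        rank_le_relIndex_mul_rank_add_index_mul_rank N H
    _ ≤ H.relIndex (N ⊔ H) * Group.rank (A × B) + (N ⊔ H).index * Group.rank (A × B) := by
        gcongr
    _ = Group.rank (A × B) * ((N ⊔ H).index + H.relIndex (N ⊔ H)) := by ring
end

section
/- Let H ≤ A × B be a subgroup of a direct product of groups with projections π_A, π_B, and let A₀ = A ∩ H and B₀ = B ∩ H (identifying A with A × {1} and B with {1} × B). Then [π_A(H), A₀] × [π_B(H), B₀] ≤ [H, H] ≤ H ∩ ([π_A(H), π_A(H)] × [π_B(H), π_B(H)]). -/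
namespace Subgroup

variable {A B : Type*} [Group A] [Group B]

/-- `⁅(a, b), (a₀, 1)⁆ = (⁅a, a₀⁆, 1)`: the `B`-coordinate of `h` drops out. -/
theorem map_inl_commutator_map_fst_comap_inl_le (H : Subgroup (A × B)) :
    ⁅H.map (MonoidHom.fst A B), H.comap (MonoidHom.inl A B)⁆.map (MonoidHom.inl A B) ≤
      ⁅H, H⁆ := by
  rw [map_commutator, commutator_le]
  rintro _ ⟨_, ⟨h, hh, rfl⟩, rfl⟩ _ ⟨a₀, ha₀, rfl⟩
  convert commutator_mem_commutator hh ha₀ using 1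
  ext <;> simp [commutatorElement_def]

theorem map_inr_commutator_map_snd_comap_inr_le (H : Subgroup (A × B)) :
    ⁅H.map (MonoidHom.snd A B), H.comap (MonoidHom.inr A B)⁆.map (MonoidHom.inr A B) ≤
      ⁅H, H⁆ := by
  rw [map_commutator, commutator_le]
  rintro _ ⟨_, ⟨h, hh, rfl⟩, rfl⟩ _ ⟨b₀, hb₀, rfl⟩
  convert commutator_mem_commutator hh hb₀ using 1
  ext <;> simp [commutatorElement_def]

theorem commutator_le_prod_commutator_map_fst_map_snd (H : Subgroup (A × B)) :
    ⁅H, H⁆ ≤ ⁅H.map (MonoidHom.fst A B), H.map (MonoidHom.fst A B)⁆.prod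
      ⁅H.map (MonoidHom.snd A B), H.map (MonoidHom.snd A B)⁆ :=
  le_prod_iff.2 ⟨(map_commutator _ _ _).le, (map_commutator _ _ _).le⟩

end Subgroup

/-- for a subgroup `H ≤ A × B`, with `A₀ = A ∩ H` and `B₀ = B ∩ H`
(viewed inside `A` resp. `B` via the identifications `A = A × {1}`, `B = {1} × B`,
i.e. as pullbacks of `H` along the canonical embeddings), we have
`[π_A(H), A₀] × [π_B(H), B₀] ≤ [H, H] ≤ H ∩ ([π_A(H), π_A(H)] × [π_B(H), π_B(H)])`. -/
theorem stmt12 {A B : Type*} [Group A] [Group B] (H : Subgroup (A × B)) :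
    (⁅H.map (MonoidHom.fst A B), H.comap (MonoidHom.inl A B)⁆.prod
        ⁅H.map (MonoidHom.snd A B), H.comap (MonoidHom.inr A B)⁆ ≤ ⁅H, H⁆) ∧
    ⁅H, H⁆ ≤ H ⊓
      (⁅H.map (MonoidHom.fst A B), H.map (MonoidHom.fst A B)⁆.prod
        ⁅H.map (MonoidHom.snd A B), H.map (MonoidHom.snd A B)⁆) :=
  ⟨Subgroup.prod_le_iff.2 ⟨Subgroup.map_inl_commutator_map_fst_comap_inl_le H,
      Subgroup.map_inr_commutator_map_snd_comap_inr_le H⟩,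
    le_inf H.commutator_le_self
      (Subgroup.commutator_le_prod_commutator_map_fst_map_snd H)⟩
end

section
/- Let r_i = (1/i) · Σ_{j | i} μ(i/j) · 2^j be the Witt numbers (μ the Möbius function), let a_n = Σ_{i=1}^n r_i and b_n = Σ_{i=1}^n a_i. Then limsup_{n→∞} b_n / b_{n-1} ≥ 2. -/
/-!
In `i r_i = Σ_{j ∣ i} μ(i/j) 2^j` every term but `2^i` has `j ≤ i/2`, so
`|i r_i - 2^i| < 2^(i/2+1)` and hence `2^i ≤ 4 i r_i ≤ 2^(i+3)`. This gives `r_{i+1} ≤ 16 r_i`,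
which survives the two partial summations as `b_{n+1} ≤ 18 b_n`: the ratios are bounded, as
they must be for the real `limsup` to be meaningful (it is `0` for unbounded sequences).
On the other hand `b_n ≥ r_n ≥ 2^n / (4n)` outgrows `c^n` for every `c < 2`, whereas a limsup
below `2` would give `b_{n+1} ≤ c b_n` eventually, hence `b_n = O(c^n)`.
-/

open scoped ArithmeticFunction

/-- The Witt numbers `r i = (1/i) Σ_{j ∣ i} μ(i/j) 2^j`. -/
noncomputable def witt (i : ℕ) : ℝ :=
  (1 / (i : ℝ)) * ∑ j ∈ i.divisors, ((ArithmeticFunction.moebius (i / j) : ℤ) : ℝ) * 2 ^ j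

/-- `a_n = r_1 + ⋯ + r_n`. -/
noncomputable def wittA (n : ℕ) : ℝ := ∑ i ∈ Finset.Icc 1 n, witt i

/-- `b_n = a_1 + ⋯ + a_n`. -/
noncomputable def wittB (n : ℕ) : ℝ := ∑ i ∈ Finset.Icc 1 n, wittA i

open Filter Asymptotics Finset

theorem Nat.le_div_two_of_mem_properDivisors {m n : ℕ} (h : m ∈ n.properDivisors) :
    m ≤ n / 2 := by
  obtain ⟨⟨k, rfl⟩, hlt⟩ := Nat.mem_properDivisors.mp h
  have hk : 2 ≤ k := by rcases k with _ | _ | k <;> simp_all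
  rw [Nat.le_div_iff_mul_le two_pos]
  exact Nat.mul_le_mul_left m hk

theorem sum_Icc_one_succ_le_mul {x : ℕ → ℝ} {K : ℝ} (hx : ∀ i, 1 ≤ i → 0 ≤ x i)
    (hK : ∀ i, 1 ≤ i → x (i + 1) ≤ K * x i) {n : ℕ} (hn : 1 ≤ n) :
    ∑ i ∈ Icc 1 (n + 1), x i ≤ (K + 1) * ∑ i ∈ Icc 1 n, x i := by
  induction n, hn using Nat.le_induction with
  | base =>
    rw [sum_Icc_succ_top (by norm_num), Icc_self, sum_singleton]
    linarith [hK 1 le_rfl]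
  | succ n hn ih =>
    rw [sum_Icc_succ_top (by omega)] at ih ⊢
    rw [sum_Icc_succ_top (by omega : 1 ≤ n + 1)]
    linarith [hK (n + 1) (by omega), hx (n + 1) (by omega)]

theorem isBigO_pow_of_eventually_le_mul {u : ℕ → ℝ} {c : ℝ} (hc : 0 < c)
    (hnonneg : ∀ᶠ n in atTop, 0 ≤ u n) (hstep : ∀ᶠ n in atTop, u (n + 1) ≤ c * u n) :
    u =O[atTop] fun n => c ^ n := by
  obtain ⟨N, hN⟩ := eventually_atTop.mp (hnonneg.and hstep)
  refine IsBigO.of_bound (u N / c ^ N) (eventually_atTop.mpr ⟨N, fun n hn => ?_⟩)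
  have hgeom : u (N + (n - N)) ≤ c ^ (n - N) * u N :=
    le_geom (u := fun k => u (N + k)) hc.le (n - N) fun k _ => (hN (N + k) (by omega)).2
  rw [Nat.add_sub_cancel' hn, pow_sub₀ c hc.ne' hn] at hgeom
  rw [Real.norm_of_nonneg (hN n hn).1, Real.norm_of_nonneg (by positivity)]
  calc u n ≤ c ^ n * (c ^ N)⁻¹ * u N := hgeom
    _ = u N / c ^ N * c ^ n := by ring

theorem le_limsup_div_pred_of_isLittleO {u : ℕ → ℝ} {q : ℝ} (hq : 0 < q)
    (hpos : ∀ᶠ n in atTop, 0 < u n)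
    (hbdd : IsBoundedUnder (· ≤ ·) atTop fun n => u n / u (n - 1))
    (hgrowth : ∀ c, 0 < c → c < q → (fun n => c ^ n) =o[atTop] u) :
    q ≤ limsup (fun n => u n / u (n - 1)) atTop := by
  by_contra! hlt
  obtain ⟨c, hc, hcq⟩ := exists_between (max_lt hlt hq)
  have hc0 : 0 < c := (le_max_right _ _).trans_lt hc
  have hratio := eventually_lt_of_limsup_lt ((le_max_left _ _).trans_lt hc) hbdd
  have hstep : ∀ᶠ n in atTop, u (n + 1) ≤ c * u n := by
    filter_upwards [(tendsto_add_atTop_nat 1).eventually (hratio.and hpos), hpos]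
      with n hn hun
    have := hn.1
    rw [Nat.add_sub_cancel, div_lt_iff₀ hun] at this
    linarith
  have hO := isBigO_pow_of_eventually_le_mul hc0 (hpos.mono fun n h => h.le) hstep
  exact isLittleO_irrefl (Frequently.of_forall fun n => (pow_pos hc0 n).ne')
    ((hgrowth c hc0 hcq).trans_isBigO hO)

theorem mul_witt_eq {i : ℕ} (hi : i ≠ 0) :
    i * witt i = ∑ j ∈ i.divisors, ((ArithmeticFunction.moebius (i / j) : ℤ) : ℝ) * 2 ^ j := by
  rw [witt]; field_simp

theorem abs_mul_witt_sub_two_pow_le {i : ℕ} (hi : i ≠ 0) :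
    |i * witt i - 2 ^ i| ≤ 2 ^ (i / 2 + 1) - 1 := by
  rw [mul_witt_eq hi, ← Nat.insert_self_properDivisors hi,
    sum_insert Nat.self_notMem_properDivisors, Nat.div_self (Nat.pos_of_ne_zero hi),
    ArithmeticFunction.moebius_apply_one, Int.cast_one, one_mul, add_sub_cancel_left]
  calc |∑ j ∈ i.properDivisors, ((ArithmeticFunction.moebius (i / j) : ℤ) : ℝ) * 2 ^ j|
      ≤ ∑ j ∈ i.properDivisors, (2 : ℝ) ^ j := by
        refine (abs_sum_le_sum_abs _ _).trans (sum_le_sum fun j _ => ?_)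
        rw [abs_mul, abs_pow, abs_two]
        exact mul_le_of_le_one_left (by positivity)
          (by exact_mod_cast ArithmeticFunction.abs_moebius_le_one)
    _ ≤ ∑ j ∈ range (i / 2 + 1), (2 : ℝ) ^ j :=
        sum_le_sum_of_subset_of_nonneg
          (fun j hj => mem_range.mpr (Nat.lt_succ_of_le (Nat.le_div_two_of_mem_properDivisors hj)))
          (fun _ _ _ => by positivity)
    _ = 2 ^ (i / 2 + 1) - 1 := by
        rw [geom_sum_eq (by norm_num : (2 : ℝ) ≠ 1)]
        norm_num

theorem two_pow_le_four_mul_mul_witt {i : ℕ} (hi : 1 ≤ i) : (2 : ℝ) ^ i ≤ 4 * (i * witt i) := by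
  have h := (abs_le.mp (abs_mul_witt_sub_two_pow_le (by omega : i ≠ 0))).1
  have hhalf : 4 * (2 : ℝ) ^ (i / 2 + 1) ≤ 3 * 2 ^ i + 4 := by
    rcases Nat.lt_or_ge i 3 with hi3 | hi3
    · interval_cases i <;> norm_num
    · have : (2 : ℝ) ^ (i / 2 + 1) ≤ 2 ^ (i - 1) := pow_le_pow_right₀ one_le_two (by omega)
      have h2 : (2 : ℝ) ^ i = 2 * 2 ^ (i - 1) := by rw [← pow_succ']; congr 1; omega
      nlinarith [pow_pos (two_pos : (0 : ℝ) < 2) (i - 1)]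
  linarith

theorem mul_witt_le_two_pow_succ {i : ℕ} (hi : 1 ≤ i) : i * witt i ≤ 2 ^ (i + 1) := by
  have h := (abs_le.mp (abs_mul_witt_sub_two_pow_le (by omega : i ≠ 0))).2
  have : (2 : ℝ) ^ (i / 2 + 1) ≤ 2 ^ i := pow_le_pow_right₀ one_le_two (by omega)
  rw [pow_succ]
  linarith

theorem witt_pos {i : ℕ} (hi : 1 ≤ i) : 0 < witt i := by
  have h := two_pow_le_four_mul_mul_witt hi
  have hi0 : (0 : ℝ) < i := by exact_mod_cast hi
  exact pos_of_mul_pos_right (by linarith [pow_pos (two_pos : (0 : ℝ) < 2) i]) hi0.le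

theorem witt_succ_le {i : ℕ} (hi : 1 ≤ i) : witt (i + 1) ≤ 16 * witt i := by
  have hup := mul_witt_le_two_pow_succ (Nat.le_succ_of_le hi)
  have hlow := two_pow_le_four_mul_mul_witt hi
  have hpos := witt_pos hi
  push_cast at hup
  rw [pow_succ, pow_succ] at hup
  have hi0 : (0 : ℝ) < i + 1 := by positivity
  refine le_of_mul_le_mul_left ?_ hi0
  nlinarith

theorem wittA_pos {n : ℕ} (hn : 1 ≤ n) : 0 < wittA n :=
  sum_pos (fun _ hi => witt_pos (mem_Icc.mp hi).1) ⟨1, mem_Icc.mpr ⟨le_rfl, hn⟩⟩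

theorem wittB_pos {n : ℕ} (hn : 1 ≤ n) : 0 < wittB n :=
  sum_pos (fun _ hi => wittA_pos (mem_Icc.mp hi).1) ⟨1, mem_Icc.mpr ⟨le_rfl, hn⟩⟩

theorem wittA_succ_le {n : ℕ} (hn : 1 ≤ n) : wittA (n + 1) ≤ 17 * wittA n :=
  (sum_Icc_one_succ_le_mul (fun _ hi => (witt_pos hi).le) (fun _ hi => witt_succ_le hi)
    hn).trans_eq (by norm_num [wittA])

theorem wittB_succ_le {n : ℕ} (hn : 1 ≤ n) : wittB (n + 1) ≤ 18 * wittB n :=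
  (sum_Icc_one_succ_le_mul (fun _ hi => (wittA_pos hi).le) (fun _ hi => wittA_succ_le hi)
    hn).trans_eq (by norm_num [wittB])

theorem witt_le_wittB {n : ℕ} (hn : 1 ≤ n) : witt n ≤ wittB n := by
  have hmem : n ∈ Icc 1 n := mem_Icc.mpr ⟨hn, le_rfl⟩
  calc witt n ≤ wittA n :=
        single_le_sum (fun _ hi => (witt_pos (mem_Icc.mp hi).1).le) hmem
    _ ≤ wittB n := single_le_sum (fun _ hi => (wittA_pos (mem_Icc.mp hi).1).le) hmem

theorem isLittleO_pow_wittB {c : ℝ} (hc : 0 < c) (hc2 : c < 2) :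
    (fun n : ℕ => c ^ n) =o[atTop] wittB := by
  have hlow : (fun n : ℕ => (2 : ℝ) ^ n / n) =O[atTop] wittB := by
    refine IsBigO.of_bound 4 (eventually_atTop.mpr ⟨1, fun n hn => ?_⟩)
    have hn0 : (0 : ℝ) < n := by exact_mod_cast hn
    rw [Real.norm_of_nonneg (by positivity), Real.norm_of_nonneg (wittB_pos hn).le,
      div_le_iff₀ hn0]
    nlinarith [two_pow_le_four_mul_mul_witt hn, witt_le_wittB hn]
  have hsmall : (fun n : ℕ => c ^ n) =o[atTop] fun n : ℕ => (2 : ℝ) ^ n / n := by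
    have h := (isLittleO_pow_const_mul_const_pow_const_pow_of_norm_lt 1
      (by rwa [Real.norm_of_nonneg hc.le] : ‖c‖ < 2)).mul_isBigO
      (isBigO_refl (fun n : ℕ => ((n : ℝ))⁻¹) atTop)
    refine h.congr' (eventually_atTop.mpr ⟨1, fun n hn => ?_⟩) (Eventually.of_forall fun n => ?_)
    · have hn0 : (n : ℝ) ≠ 0 := by exact_mod_cast (by omega : n ≠ 0)
      field_simp
    · simp [div_eq_mul_inv]
  exact hsmall.trans_isBigO hlow

/-- `limsup_{n → ∞} b_n / b_{n-1} ≥ 2`. -/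
theorem stmt16 :
    2 ≤ Filter.limsup (fun n => wittB n / wittB (n - 1)) Filter.atTop := by
  have hbdd : IsBoundedUnder (· ≤ ·) atTop fun n => wittB n / wittB (n - 1) := by
    refine isBoundedUnder_of_eventually_le (a := 18) (eventually_atTop.mpr ⟨2, fun n hn => ?_⟩)
    obtain ⟨m, rfl⟩ := Nat.exists_eq_add_of_le' (by omega : 1 ≤ n)
    rw [Nat.add_sub_cancel, div_le_iff₀ (wittB_pos (by omega))]
    exact wittB_succ_le (by omega)
  exact le_limsup_div_pred_of_isLittleO two_pos
    (eventually_atTop.mpr ⟨1, fun _ hn => wittB_pos hn⟩) hbdd fun _ => isLittleO_pow_wittB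
end
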